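/- Let p > 1 be real, C ∈ (0,1), and suppose a nonnegative sequence (wᵢ)_{i≥1} satisfies Σwᵢ = 1, Σwᵢ^p = C, and there is m ≥ 1 with w₁ = w₂ = ... = w_m > w_{m+1} ≥ 0 and wᵢ = 0 for all i ≥ m+2. Then m = ⌊w₁⁻¹⌋, w_{m+1} = 1 − m·w₁, and w₁ is the unique z ∈ (0,1) with ⌊z⁻¹⌋·z^p + (1−⌊z⁻¹⌋z)^p = C; in particular such a vector is uniquely determined by p and C. -/

import Mathlib

/-!
A vector as in the theorem is `(z, …, z, 1 - m z, 0, …)` with `m = ⌊z⁻¹⌋`, so its `p`-th power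
sum is `F z = ⌊z⁻¹⌋ z ^ p + (1 - ⌊z⁻¹⌋ z) ^ p`. On a block `[(n + 1)⁻¹, n⁻¹]` the function
`n z ^ p + (1 - n z) ^ p` has derivative `n p (z ^ (p - 1) - (1 - n z) ^ (p - 1)) > 0`, since
`1 - n z < z` there, and it runs from `(n + 1) ^ (1 - p)` to `n ^ (1 - p)`. These ranges line up
as `n` decreases, so `F` is strictly increasing on `(0, 1]` and `C = F (w 0)` determines `w 0`.
-/

open Real Set

theorem tsum_eq_nsmul_add_of_eq_const_of_eq_zero {M : Type*} [AddCommMonoid M]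
    [TopologicalSpace M] {f : ℕ → M} {a : M} {m : ℕ} (hconst : ∀ i < m, f i = a)
    (hzero : ∀ i, m + 1 ≤ i → f i = 0) :
    ∑' i, f i = m • a + f m := by
  rw [tsum_eq_sum (s := Finset.range (m + 1)) fun i hi => hzero i (by simpa using hi),
    Finset.sum_range_succ, Finset.sum_congr rfl fun i hi => hconst i (Finset.mem_range.mp hi),
    Finset.sum_const, Finset.card_range]

noncomputable def blockPowerSum (p n z : ℝ) : ℝ := n * z ^ p + (1 - n * z) ^ p

section blockPowerSum

variable {p n z : ℝ}

theorem mul_inv_rpow_eq_rpow_one_sub (hn : 0 < n) : n * n⁻¹ ^ p = n ^ (1 - p) := by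
  rw [rpow_sub hn, rpow_one, inv_rpow hn.le, div_eq_mul_inv]

theorem blockPowerSum_inv_self (hp : p ≠ 0) (hn : 0 < n) :
    blockPowerSum p n n⁻¹ = n ^ (1 - p) := by
  rw [blockPowerSum, mul_inv_cancel₀ hn.ne', sub_self, zero_rpow hp, add_zero,
    mul_inv_rpow_eq_rpow_one_sub hn]

theorem blockPowerSum_inv_add_one (hn : 0 < n + 1) :
    blockPowerSum p n (n + 1)⁻¹ = (n + 1) ^ (1 - p) := by
  have hrem : 1 - n * (n + 1)⁻¹ = (n + 1)⁻¹ := by field_simp; ring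
  rw [blockPowerSum, hrem, ← mul_inv_rpow_eq_rpow_one_sub hn]
  ring

theorem continuous_blockPowerSum (hp : 0 ≤ p) : Continuous (blockPowerSum p n) := by
  unfold blockPowerSum
  have := continuous_rpow_const hp
  fun_prop

theorem hasDerivAt_blockPowerSum (hz : 0 < z) (hnz : n * z < 1) :
    HasDerivAt (blockPowerSum p n) (n * p * (z ^ (p - 1) - (1 - n * z) ^ (p - 1))) z := by
  have hrem : HasDerivAt (fun z => 1 - n * z) (-n) z := by
    simpa using ((hasDerivAt_id z).const_mul n).const_sub 1
  refine (((hasDerivAt_rpow_const (p := p) (Or.inl hz.ne')).const_mul n).add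
    ((hasDerivAt_rpow_const (p := p) (Or.inl (sub_pos.2 hnz).ne')).comp z hrem)).congr_deriv ?_
  ring

theorem strictMonoOn_blockPowerSum (hp : 1 < p) (hn : 0 < n) :
    StrictMonoOn (blockPowerSum p n) (Icc (n + 1)⁻¹ n⁻¹) := by
  refine strictMonoOn_of_deriv_pos (convex_Icc _ _)
    (continuous_blockPowerSum (by linarith)).continuousOn fun z hz => ?_
  rw [interior_Icc] at hz
  obtain ⟨hz₁, hz₂⟩ := hz
  have hz0 : 0 < z := (inv_pos.2 (by linarith)).trans hz₁
  have hnz : n * z < 1 := by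
    simpa [hn.ne'] using mul_lt_mul_of_pos_left hz₂ hn
  have hrem : 1 - n * z < z := by
    have := (inv_lt_iff_one_lt_mul₀' (by linarith : 0 < n + 1)).1 hz₁
    linarith
  have hpow : (1 - n * z) ^ (p - 1) < z ^ (p - 1) :=
    rpow_lt_rpow (by linarith) hrem (by linarith)
  rw [(hasDerivAt_blockPowerSum hz0 hnz).deriv]
  exact mul_pos (by positivity) (sub_pos.2 hpow)

end blockPowerSum

section floor

variable {z : ℝ}

theorem one_le_floor_inv (hz : z ∈ Ioc 0 1) : (1 : ℝ) ≤ ⌊z⁻¹⌋ := by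
  exact_mod_cast Int.le_floor.2 (by simpa using one_le_inv_iff₀.2 hz)

theorem mem_Ioc_inv_floor_inv (hz : z ∈ Ioc 0 1) :
    z ∈ Ioc ((⌊z⁻¹⌋ + 1 : ℝ)⁻¹) (⌊z⁻¹⌋ : ℝ)⁻¹ := by
  have hn := one_le_floor_inv hz
  constructor
  · rw [inv_lt_comm₀ (by linarith) hz.1]
    exact Int.lt_floor_add_one _
  · rw [le_inv_comm₀ hz.1 (by linarith)]
    exact Int.floor_le _

end floor

noncomputable def twoValuedPowerSum (p z : ℝ) : ℝ := blockPowerSum p ⌊z⁻¹⌋ z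

theorem twoValuedPowerSum_mem_Ioc {p z : ℝ} (hp : 1 < p) (hz : z ∈ Ioc 0 1) :
    twoValuedPowerSum p z ∈ Ioc ((⌊z⁻¹⌋ + 1 : ℝ) ^ (1 - p)) ((⌊z⁻¹⌋ : ℝ) ^ (1 - p)) := by
  have hn : (0 : ℝ) < ⌊z⁻¹⌋ := zero_lt_one.trans_le (one_le_floor_inv hz)
  have hmono := strictMonoOn_blockPowerSum hp hn
  have hz' := mem_Ioc_inv_floor_inv hz
  have hle : ((⌊z⁻¹⌋ : ℝ) + 1)⁻¹ ≤ (⌊z⁻¹⌋ : ℝ)⁻¹ := hz'.1.le.trans hz'.2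
  constructor
  · rw [← blockPowerSum_inv_add_one (by linarith)]
    exact hmono (left_mem_Icc.2 hle) (Ioc_subset_Icc_self hz') hz'.1
  · rw [← blockPowerSum_inv_self (by linarith) hn]
    exact hmono.monotoneOn (Ioc_subset_Icc_self hz') (right_mem_Icc.2 hle) hz'.2

theorem strictMonoOn_twoValuedPowerSum {p : ℝ} (hp : 1 < p) :
    StrictMonoOn (twoValuedPowerSum p) (Ioc 0 1) := by
  intro x hx y hy hxy
  obtain hfloor | hfloor :=
    (Int.floor_le_floor (inv_anti₀ hx.1 hxy.le) : ⌊y⁻¹⌋ ≤ ⌊x⁻¹⌋).eq_or_lt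
  · have hn : (0 : ℝ) < ⌊x⁻¹⌋ := zero_lt_one.trans_le (one_le_floor_inv hx)
    have hy' := mem_Ioc_inv_floor_inv hy
    rw [hfloor] at hy'
    unfold twoValuedPowerSum
    rw [hfloor]
    exact strictMonoOn_blockPowerSum hp hn (Ioc_subset_Icc_self (mem_Ioc_inv_floor_inv hx))
      (Ioc_subset_Icc_self hy') hxy
  · calc twoValuedPowerSum p x ≤ (⌊x⁻¹⌋ : ℝ) ^ (1 - p) := (twoValuedPowerSum_mem_Ioc hp hx).2
      _ ≤ (⌊y⁻¹⌋ + 1 : ℝ) ^ (1 - p) := by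
        refine rpow_le_rpow_of_nonpos (by linarith [one_le_floor_inv hy]) ?_ (by linarith)
        exact_mod_cast hfloor
      _ < twoValuedPowerSum p y := (twoValuedPowerSum_mem_Ioc hp hy).1

theorem two_valued_vector_unique_general (p C : ℝ) (hp : 1 < p) (hC : C ∈ Set.Ioo (0:ℝ) 1)
    (w : ℕ → ℝ) (hw : ∀ i, 0 ≤ w i)
    (hsum : ∑' i, w i = 1) (hsump : ∑' i, w i ^ p = C)
    (m : ℕ)
    (hconst : ∀ i < m, w i = w 0) (hlt : w m < w 0)
    (hzero : ∀ i, m + 1 ≤ i → w i = 0) :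
    (m : ℤ) = ⌊(w 0)⁻¹⌋ ∧
    w m = 1 - (m : ℝ) * w 0 ∧
    w 0 ∈ Set.Ioo (0:ℝ) 1 ∧
    (⌊(w 0)⁻¹⌋ : ℝ) * (w 0) ^ p + (1 - (⌊(w 0)⁻¹⌋ : ℝ) * w 0) ^ p = C ∧
    ∀ z ∈ Set.Ioo (0:ℝ) 1,
      (⌊z⁻¹⌋ : ℝ) * z ^ p + (1 - (⌊z⁻¹⌋ : ℝ) * z) ^ p = C → z = w 0 := by
  have hp0 : p ≠ 0 := by linarith
  have hmass : (m : ℝ) * w 0 + w m = 1 := by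
    rw [← hsum, tsum_eq_nsmul_add_of_eq_const_of_eq_zero hconst hzero, nsmul_eq_mul]
  have hpower : (m : ℝ) * w 0 ^ p + w m ^ p = C := by
    rw [← hsump, tsum_eq_nsmul_add_of_eq_const_of_eq_zero (f := fun i => w i ^ p)
      (fun i hi => by rw [hconst i hi]) (fun i hi => by rw [hzero i hi, zero_rpow hp0]),
      nsmul_eq_mul]
  have hm : (1 : ℝ) ≤ m := by
    have : m ≠ 0 := by rintro rfl; exact hlt.false
    exact_mod_cast Nat.one_le_iff_ne_zero.2 this
  have hwm := hw m
  have hw0 : 0 < w 0 := by nlinarith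
  have hw1 : w 0 < 1 := by
    by_contra! h
    have hvertex : w 0 = 1 ∧ w m = 0 ∧ (m : ℝ) = 1 := by refine ⟨?_, ?_, ?_⟩ <;> nlinarith
    rw [hvertex.1, hvertex.2.1, hvertex.2.2, one_rpow, zero_rpow hp0] at hpower
    linarith [hC.2]
  have hfloor : ⌊(w 0)⁻¹⌋ = m := by
    rw [Int.floor_eq_iff, Int.cast_natCast, ← one_div, le_div_iff₀ hw0, div_lt_iff₀ hw0]
    constructor <;> linarith
  have hvalue : twoValuedPowerSum p (w 0) = C := by
    rw [twoValuedPowerSum, hfloor, Int.cast_natCast, blockPowerSum, ← hpower]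
    congr 2
    linarith
  refine ⟨hfloor.symm, by linarith, ⟨hw0, hw1⟩, hvalue, fun z hz hzC => ?_⟩
  exact (strictMonoOn_twoValuedPowerSum hp).injOn (Ioo_subset_Ioc_self hz)
    (Ioo_subset_Ioc_self ⟨hw0, hw1⟩) (hzC.trans hvalue.symm)

/-- Uniqueness of the two-valued optimal probability vector: if `(wᵢ)` (indexed so
that `w 0` is the first entry) is nonnegative, sums to `1`, has `p`-th power sum `C`,
with `w 0 = ⋯ = w (m-1) > w m ≥ 0` and `w i = 0` for `i ≥ m+1`, then
`m = ⌊(w 0)⁻¹⌋`, `w m = 1 − m·(w 0)`, and `w 0` is the unique `z ∈ (0,1)` solving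
`⌊z⁻¹⌋·z^p + (1−⌊z⁻¹⌋·z)^p = C`. -/
theorem two_valued_vector_unique (p C : ℝ) (hp : 1 < p) (hC : C ∈ Set.Ioo (0:ℝ) 1)
    (w : ℕ → ℝ) (hw : ∀ i, 0 ≤ w i)
    (hsum : ∑' i, w i = 1) (hsump : ∑' i, w i ^ p = C)
    (m : ℕ) (hm : 1 ≤ m)
    (hconst : ∀ i < m, w i = w 0) (hlt : w m < w 0)
    (hzero : ∀ i, m + 1 ≤ i → w i = 0) :
    (m : ℤ) = ⌊(w 0)⁻¹⌋ ∧
    w m = 1 - (m : ℝ) * w 0 ∧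
    w 0 ∈ Set.Ioo (0:ℝ) 1 ∧
    (⌊(w 0)⁻¹⌋ : ℝ) * (w 0) ^ p + (1 - (⌊(w 0)⁻¹⌋ : ℝ) * w 0) ^ p = C ∧
    ∀ z ∈ Set.Ioo (0:ℝ) 1,
      (⌊z⁻¹⌋ : ℝ) * z ^ p + (1 - (⌊z⁻¹⌋ : ℝ) * z) ^ p = C → z = w 0 :=
  two_valued_vector_unique_general p C hp hC w hw hsum hsump m hconst hlt hzero
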